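/- The two-player game of Example 4 (player 1 minimizes (1/2)(x¹)ᵀ[[3,1],[1,3]]x¹ + (x¹)ᵀ[[4,−3],[−1,1]]x² + (7,2)x¹ and player 2 minimizes (1/2)(x²)ᵀ[[2,1],[1,2]]x² + (x²)ᵀ[[1,−2],[−3,4]]x¹ + (5,6)x², both over integer boxes [−5,5]²) satisfies the 2-groups sign conditions with partition G₁ = {(1,1),(2,2)} and G₂ = {(1,2),(2,1)}, but is not a supermodular game: −θ₁ is not supermodular in x¹, as witnessed by −θ₁((1,0),(0,0)) − θ₁((0,1),(0,0)) = −12 > −13 = −θ₁((0,0),(0,0)) − θ₁((1,1),(0,0)). -/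
import Mathlib


/-- Player 1's objective in Example 4: variables `(a,b)` are player 1's,
`(c,d)` are player 2's. -/
noncomputable def ex4θ1 (a b c d : ℝ) : ℝ :=
  (1 / 2) * (3 * a ^ 2 + 2 * a * b + 3 * b ^ 2)
    + a * (4 * c - 3 * d) + b * (-c + d) + 7 * a + 2 * b

/-- Player 2's objective in Example 4. -/
noncomputable def ex4θ2 (a b c d : ℝ) : ℝ :=
  (1 / 2) * (2 * c ^ 2 + 2 * c * d + 2 * d ^ 2)
    + c * (a - 2 * b) + d * (-3 * a + 4 * b) + 5 * c + 6 * d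

/-- Example 4 satisfies the 2-groups sign conditions with partition
`G₁ = {(1,1),(2,2)} = {a,d}`, `G₂ = {(1,2),(2,1)} = {b,c}` (stated via
second-order mixed differences with nonnegative increments: nonnegative
across groups, nonpositive within a group), but it is not a supermodular
game: `−θ₁` is not supermodular in `x¹`, as witnessed by
`−θ₁((1,0),(0,0)) − θ₁((0,1),(0,0)) = −12 > −13
  = −θ₁((0,0),(0,0)) − θ₁((1,1),(0,0))`. -/
theorem stmt16 :
    (∀ a b c d s t : ℝ, 0 ≤ s → 0 ≤ t →
      -- (1,1)-(1,2): different groups, mixed partial ≥ 0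
      (0 ≤ ex4θ1 (a+s) (b+t) c d - ex4θ1 (a+s) b c d - ex4θ1 a (b+t) c d + ex4θ1 a b c d) ∧
      -- (1,1)-(2,1): different groups
      (0 ≤ ex4θ1 (a+s) b (c+t) d - ex4θ1 (a+s) b c d - ex4θ1 a b (c+t) d + ex4θ1 a b c d) ∧
      -- (1,1)-(2,2): same group, mixed partial ≤ 0
      (ex4θ1 (a+s) b c (d+t) - ex4θ1 (a+s) b c d - ex4θ1 a b c (d+t) + ex4θ1 a b c d ≤ 0) ∧
      -- (1,2)-(2,1): same group
      (ex4θ1 a (b+s) (c+t) d - ex4θ1 a (b+s) c d - ex4θ1 a b (c+t) d + ex4θ1 a b c d ≤ 0) ∧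
      -- (1,2)-(2,2): different groups
      (0 ≤ ex4θ1 a (b+s) c (d+t) - ex4θ1 a (b+s) c d - ex4θ1 a b c (d+t) + ex4θ1 a b c d) ∧
      -- (2,1)-(2,2): different groups
      (0 ≤ ex4θ2 a b (c+s) (d+t) - ex4θ2 a b (c+s) d - ex4θ2 a b c (d+t) + ex4θ2 a b c d) ∧
      -- (2,1)-(1,1): different groups
      (0 ≤ ex4θ2 (a+t) b (c+s) d - ex4θ2 a b (c+s) d - ex4θ2 (a+t) b c d + ex4θ2 a b c d) ∧
      -- (2,1)-(1,2): same group
      (ex4θ2 a (b+t) (c+s) d - ex4θ2 a b (c+s) d - ex4θ2 a (b+t) c d + ex4θ2 a b c d ≤ 0) ∧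
      -- (2,2)-(1,1): same group
      (ex4θ2 (a+t) b c (d+s) - ex4θ2 a b c (d+s) - ex4θ2 (a+t) b c d + ex4θ2 a b c d ≤ 0) ∧
      -- (2,2)-(1,2): different groups
      (0 ≤ ex4θ2 a (b+t) c (d+s) - ex4θ2 a b c (d+s) - ex4θ2 a (b+t) c d + ex4θ2 a b c d)) ∧
    (-ex4θ1 1 0 0 0 - ex4θ1 0 1 0 0 = -12) ∧
    (-ex4θ1 0 0 0 0 - ex4θ1 1 1 0 0 = -13) ∧
    ((-12 : ℝ) > -13) ∧
    ¬ (-ex4θ1 1 0 0 0 - ex4θ1 0 1 0 0 ≤ -ex4θ1 0 0 0 0 - ex4θ1 1 1 0 0) := by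
  refine ⟨?_, ?_, ?_, by norm_num, ?_⟩
  · intro a b c d s t hs ht
    refine ⟨?_, ?_, ?_, ?_, ?_, ?_, ?_, ?_, ?_, ?_⟩ <;>
      simp only [ex4θ1, ex4θ2] <;> nlinarith [mul_nonneg hs ht]
  · simp [ex4θ1]; ring
  · simp [ex4θ1]; ring
  · simp [ex4θ1]; norm_num
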